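/- arXiv:2605.21718 — 2 statements merged into one kernel-verified Lean document; each statement's English description precedes it below -/
import Mathlib

section
/- For every integer n ≥ 1, num_T(3n,−1) = num_T(3n+1,−1) = num_T(3n+2,−1) = 3^{v_3((3n)!)}, where v_3(M) denotes the exponent of 3 in the prime factorization of M. -/
open Polynomial Finset
open scoped Classical

/-- The ternary partitions of `n`: partitions of `n` all of whose parts are powers of `3`. -/
noncomputable def terParts (n : ℕ) : Finset (Nat.Partition n) :=
  Finset.univ.filter (fun μ => ∀ i ∈ μ.parts, ∃ k : ℕ, i = 3 ^ k)

/-- `h_{T,λ}(x) = ∏_{k ≥ 0, 3^k ≤ n} (1+x^{3^k})^(⌊n/3^k⌋ - m_λ(3^k))` in `ℤ[x]`. -/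
noncomputable def hT (n : ℕ) (μ : Nat.Partition n) : Polynomial ℤ :=
  ∏ k ∈ (Finset.range (n + 1)).filter (fun k => 3 ^ k ≤ n),
    (1 + X ^ (3 ^ k)) ^ (n / 3 ^ k - μ.parts.count (3 ^ k))

/-- `G_T(n,x)`: the (normalized) gcd of the `h_{T,λ}(x)` over ternary partitions `λ` of `n`. -/
noncomputable def GT (n : ℕ) : Polynomial ℤ :=
  (terParts n).gcd (hT n)

theorem GT_dvd_sum (n : ℕ) :
    ∃ q : Polynomial ℤ, (∑ μ ∈ terParts n, hT n μ) = GT n * q :=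
  exists_eq_mul_right_of_dvd (Finset.dvd_sum fun _ hμ => Finset.gcd_dvd hμ)

/-- `num_T(n,x) = (∑_{λ ternary partition of n} h_{T,λ}(x)) / G_T(n,x)`. -/
noncomputable def numT (n : ℕ) : Polynomial ℤ :=
  (GT_dvd_sum n).choose

/-!
Since `1 + x^(3^k) = ∏_{j ≤ k} Φ_{2·3^j}(x)`, every `h_{T,λ}` is a product of powers of the
pairwise distinct irreducibles `Φ_{2·3^j}`, the exponent of `Φ_{2·3^j}` being
`e_λ(j) = ∑_{k ≥ j} (⌊N/3^k⌋ - m_λ(3^k))` (`hTExp`). As `∑_{k ≥ j} m_λ(3^k) ≤ ⌊N/3^j⌋`, with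
equality for the partition into `⌊N/3^j⌋` parts `3^j` and ones (`powAndOnes`), the least of these
exponents is `∑_{k > j} ⌊N/3^k⌋` (`GTExp`), and `G_T` is the product of the `Φ_{2·3^j}` to these
powers.

At `x = -1` we have `Φ_2 = 0` and `Φ_{2·3^j} = 3` for `j ≥ 1`. The quotient `h_{T,λ} / G_T` still
contains `Φ_2` unless `λ = 1^N`, and for `λ = 1^N` it takes the value `3^(∑_{k ≥ 1} ⌊N/3^k⌋)`,
which is `3^(v₃(N!))` by Legendre's formula. Finally `v₃((3n)!) = v₃((3n+1)!) = v₃((3n+2)!)`.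
-/

theorem dvd_prod_pow_of_forall_not_pow_succ_dvd {α ι : Type*} [CommMonoidWithZero α]
    [UniqueFactorizationMonoid α] {p : ι → α} (hp : ∀ i, Prime (p i)) {b m : ι → ℕ}
    (s : Finset ι) {g : α} (hg : g ∣ ∏ i ∈ s, p i ^ b i) (hm : ∀ i ∈ s, ¬p i ^ (m i + 1) ∣ g) :
    g ∣ ∏ i ∈ s, p i ^ m i := by
  induction s using Finset.induction_on generalizing g with
  | empty => simpa using hg
  | @insert t s hts ih =>
    rw [prod_insert hts] at hg ⊢
    have hg0 : g ≠ 0 := by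
      have := nontrivial_of_ne _ _ (hp t).ne_zero
      rintro rfl
      refine mul_ne_zero (pow_ne_zero _ (hp t).ne_zero) ?_ (zero_dvd_iff.1 hg)
      exact prod_ne_zero_iff.2 fun i _ => pow_ne_zero _ (hp i).ne_zero
    obtain ⟨k, g, hpg, rfl⟩ := WfDvdMonoid.max_power_factor hg0 (hp t).irreducible
    have hk : k ≤ m t := by
      by_contra! h
      exact hm t (mem_insert_self t s) ((pow_dvd_pow _ h).trans (dvd_mul_right _ _))
    have hcop : IsRelPrime g (p t ^ b t) :=
      ((hp t).irreducible.isRelPrime_iff_not_dvd.2 hpg).symm.pow_right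
    refine mul_dvd_mul (pow_dvd_pow _ hk) (ih ?_ fun i hi h => ?_)
    · exact hcop.dvd_of_dvd_mul_left ((dvd_mul_left _ _).trans hg)
    · exact hm i (mem_insert_of_mem hi) (h.trans (dvd_mul_left _ _))

theorem cyclotomic_dvd_cyclotomic_iff {m n : ℕ} (hm : 0 < m) (hn : 0 < n) :
    cyclotomic m ℤ ∣ cyclotomic n ℤ ↔ m = n := by
  refine ⟨fun h => cyclotomic_injective (R := ℤ) ?_, fun h => h ▸ dvd_rfl⟩
  exact eq_of_monic_of_associated (cyclotomic.monic m ℤ) (cyclotomic.monic n ℤ)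
    ((cyclotomic.irreducible hm).associated_of_dvd (cyclotomic.irreducible hn) h)

theorem cyclotomic_two_mul_three_pow_succ (R : Type*) [CommRing R] (j : ℕ) :
    cyclotomic (2 * 3 ^ (j + 1)) R = expand R (3 ^ j) (cyclotomic 6 R) := by
  induction j with
  | zero => norm_num
  | succ j ih =>
    rw [pow_succ, ← mul_assoc, ← cyclotomic_expand_eq_cyclotomic Nat.prime_three
      (dvd_mul_of_dvd_right (dvd_pow_self 3 j.succ_ne_zero) 2), ih, ← expand_mul, ← pow_succ']

theorem prod_cyclotomic_two_mul_three_pow (R : Type*) [CommRing R] (k : ℕ) :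
    ∏ j ∈ range (k + 1), cyclotomic (2 * 3 ^ j) R = 1 + X ^ 3 ^ k := by
  induction k with
  | zero => simp [cyclotomic_two, add_comm]
  | succ k ih =>
    rw [prod_range_succ, ih, cyclotomic_two_mul_three_pow_succ, cyclotomic_six]
    simp only [map_add, map_sub, map_pow, expand_X, map_one]
    ring

theorem eval_neg_one_cyclotomic_two_mul_three_pow_succ (R : Type*) [CommRing R] (j : ℕ) :
    eval (-1 : R) (cyclotomic (2 * 3 ^ (j + 1)) R) = 3 := by
  rw [cyclotomic_two_mul_three_pow_succ, expand_eval, Odd.neg_one_pow (Odd.pow (by decide)),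
    cyclotomic_six]
  norm_num

theorem prime_cyclotomic_two_mul_three_pow (j : ℕ) : Prime (cyclotomic (2 * 3 ^ j) ℤ) :=
  (cyclotomic.irreducible (by positivity)).prime

theorem prod_range_prod_pow {M : Type*} [CommMonoid M] (f : ℕ → M) (e : ℕ → ℕ) (n : ℕ) :
    ∏ k ∈ range n, (∏ j ∈ range (k + 1), f j) ^ e k = ∏ j ∈ range n, f j ^ ∑ k ∈ Ico j n, e k := by
  simp_rw [← prod_pow, ← prod_pow_eq_pow_sum]
  exact prod_comm' fun k j => by simp only [mem_range, mem_Ico]; omega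

namespace Nat.Partition

variable {n : ℕ} (μ : n.Partition)

theorem sum_count_mul_le (s : Finset ℕ) : ∑ a ∈ s, μ.parts.count a * a ≤ n :=
  calc ∑ a ∈ s, μ.parts.count a * a
      ≤ ∑ a ∈ s ∪ μ.parts.toFinset, μ.parts.count a * a := sum_le_sum_of_subset subset_union_left
    _ = μ.parts.sum := by
      rw [sum_multiset_count_of_subset _ (s ∪ _) subset_union_right]
      simp only [smul_eq_mul]
    _ = n := μ.parts_sum

theorem sum_count_three_pow_mul_le (s : Finset ℕ) :
    ∑ k ∈ s, μ.parts.count (3 ^ k) * 3 ^ k ≤ n := by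
  rw [← sum_image (f := fun a => μ.parts.count a * a)
    fun _ _ _ _ h => Nat.pow_right_injective (le_succ 2) h]
  exact μ.sum_count_mul_le _

theorem count_three_pow_le_div (k : ℕ) : μ.parts.count (3 ^ k) ≤ n / 3 ^ k :=
  (Nat.le_div_iff_mul_le (by positivity)).2 (by simpa using μ.sum_count_three_pow_mul_le {k})

theorem sum_count_three_pow_Ico_le_div (j m : ℕ) :
    ∑ k ∈ Ico j m, μ.parts.count (3 ^ k) ≤ n / 3 ^ j := by
  rw [Nat.le_div_iff_mul_le (by positivity), sum_mul]
  refine le_trans (sum_le_sum fun k hk => ?_) (μ.sum_count_three_pow_mul_le _)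
  exact Nat.mul_le_mul_left _ (Nat.pow_le_pow_right (by norm_num) (mem_Ico.1 hk).1)

theorem parts_eq_replicate_one_of_card_eq (h : Multiset.card μ.parts = n) :
    μ.parts = Multiset.replicate n 1 := by
  suffices ∀ a ∈ μ.parts, a = 1 by
    have := Multiset.eq_replicate_card.2 this
    rwa [h] at this
  intro a ha
  obtain ⟨t, ht⟩ := Multiset.exists_cons_of_mem ha
  have hsum := μ.parts_sum
  have hpos : ∀ b ∈ t, 1 ≤ b := fun b hb => μ.parts_pos (ht ▸ Multiset.mem_cons_of_mem hb)
  have ht_le : Multiset.card t ≤ t.sum := by simpa using Multiset.card_nsmul_le_sum hpos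
  rw [ht, Multiset.sum_cons] at hsum
  rw [ht, Multiset.card_cons] at h
  have := μ.parts_pos ha
  omega

theorem sum_count_three_pow_eq_card (hμ : μ ∈ terParts n) :
    ∑ k ∈ range (n + 1), μ.parts.count (3 ^ k) = Multiset.card μ.parts := by
  rw [← sum_image (f := fun a => μ.parts.count a)
    fun _ _ _ _ h => Nat.pow_right_injective (le_succ 2) h]
  refine Multiset.sum_count_eq_card fun a ha => ?_
  obtain ⟨k, rfl⟩ := (mem_filter.1 hμ).2 a ha
  exact mem_image_of_mem _ (mem_range.2 (Nat.lt_succ_of_lt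
    ((Nat.lt_pow_self (by norm_num)).trans_le (μ.le_of_mem_parts ha))))

end Nat.Partition

noncomputable def hTExp (N : ℕ) (μ : N.Partition) (j : ℕ) : ℕ :=
  ∑ k ∈ Ico j (N + 1), (N / 3 ^ k - μ.parts.count (3 ^ k))

def GTExp (N j : ℕ) : ℕ :=
  ∑ k ∈ Ico (j + 1) (N + 1), N / 3 ^ k

noncomputable def powAndOnes (N j : ℕ) : N.Partition where
  parts := Multiset.replicate (N / 3 ^ j) (3 ^ j) + Multiset.replicate (N % 3 ^ j) 1
  parts_pos hi := by
    rcases Multiset.mem_add.1 hi with h | h <;> rw [Multiset.eq_of_mem_replicate h] <;> positivity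
  parts_sum := by
    simp only [Multiset.sum_add, Multiset.sum_replicate, smul_eq_mul, mul_one]
    exact Nat.div_add_mod' N (3 ^ j)

section

variable {N : ℕ}

theorem hTExp_add_sum_count (μ : N.Partition) {j : ℕ} (hj : j ≤ N) :
    hTExp N μ j + ∑ k ∈ Ico j (N + 1), μ.parts.count (3 ^ k) = N / 3 ^ j + GTExp N j := by
  rw [hTExp, GTExp, ← sum_eq_sum_Ico_succ_bot (by omega : j < N + 1) fun k => N / 3 ^ k,
    sum_tsub_distrib _ fun k _ => μ.count_three_pow_le_div k]
  exact Nat.sub_add_cancel (sum_le_sum fun k _ => μ.count_three_pow_le_div k)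

theorem GTExp_le_hTExp (μ : N.Partition) {j : ℕ} (hj : j ≤ N) : GTExp N j ≤ hTExp N μ j := by
  have := hTExp_add_sum_count μ hj
  have := μ.sum_count_three_pow_Ico_le_div j (N + 1)
  omega

theorem hTExp_sub_GTExp_zero {μ : N.Partition} (hμ : μ ∈ terParts N) :
    hTExp N μ 0 - GTExp N 0 = N - Multiset.card μ.parts := by
  have := hTExp_add_sum_count μ (Nat.zero_le N)
  rw [← range_eq_Ico, μ.sum_count_three_pow_eq_card hμ, pow_zero, Nat.div_one] at this
  omega

theorem powAndOnes_mem_terParts (j : ℕ) : powAndOnes N j ∈ terParts N := by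
  refine mem_filter.2 ⟨mem_univ _, fun i hi => ?_⟩
  rcases Multiset.mem_add.1 hi with h | h
  · exact ⟨j, Multiset.eq_of_mem_replicate h⟩
  · exact ⟨0, Multiset.eq_of_mem_replicate h⟩

theorem powAndOnes_zero_parts : (powAndOnes N 0).parts = Multiset.replicate N 1 := by
  simp [powAndOnes, Nat.mod_one]

theorem hTExp_powAndOnes {j : ℕ} (hj : j ≤ N) : hTExp N (powAndOnes N j) j = GTExp N j := by
  have hself : N / 3 ^ j ≤ (powAndOnes N j).parts.count (3 ^ j) := by
    simp [powAndOnes, Multiset.count_replicate]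
  have hsingle := single_le_sum (f := fun k => (powAndOnes N j).parts.count (3 ^ k))
    (fun _ _ => Nat.zero_le _) (mem_Ico.2 ⟨le_rfl, (by omega : j < N + 1)⟩)
  have := hTExp_add_sum_count (powAndOnes N j) hj
  have := (powAndOnes N j).sum_count_three_pow_Ico_le_div j (N + 1)
  omega

theorem hTExp_powAndOnes_zero_sub_GTExp {j : ℕ} (hj : 1 ≤ j) (hjN : j ≤ N) :
    hTExp N (powAndOnes N 0) j - GTExp N j = N / 3 ^ j := by
  have hcount : ∑ k ∈ Ico j (N + 1), (powAndOnes N 0).parts.count (3 ^ k) = 0 :=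
    sum_eq_zero fun k hk => by
      have : 1 < 3 ^ k := Nat.one_lt_pow (by have := (mem_Ico.1 hk).1; omega) (by norm_num)
      simp [powAndOnes_zero_parts, Multiset.count_replicate, this.ne]
  have := hTExp_add_sum_count (powAndOnes N 0) hjN
  rw [hcount, add_zero] at this
  rw [this, Nat.add_sub_cancel]

theorem eq_powAndOnes_zero_of_card_eq {μ : N.Partition} (h : Multiset.card μ.parts = N) :
    μ = powAndOnes N 0 :=
  Nat.Partition.ext (by rw [μ.parts_eq_replicate_one_of_card_eq h, powAndOnes_zero_parts])

theorem hT_eq_prod_cyclotomic (μ : N.Partition) :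
    hT N μ = ∏ j ∈ range (N + 1), cyclotomic (2 * 3 ^ j) ℤ ^ hTExp N μ j := by
  have hfilter : hT N μ = ∏ k ∈ range (N + 1),
      (1 + X ^ 3 ^ k) ^ (N / 3 ^ k - μ.parts.count (3 ^ k)) := by
    refine prod_filter_of_ne fun k _ hk => ?_
    by_contra! hN
    rw [Nat.div_eq_of_lt hN, Nat.zero_sub, pow_zero] at hk
    exact hk rfl
  simp_rw [hfilter, ← prod_cyclotomic_two_mul_three_pow, prod_range_prod_pow, hTExp]

theorem cyclotomic_pow_succ_not_dvd_GT {j : ℕ} (hj : j ≤ N) :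
    ¬cyclotomic (2 * 3 ^ j) ℤ ^ (GTExp N j + 1) ∣ GT N := by
  intro hdvd
  have hprime := prime_cyclotomic_two_mul_three_pow j
  have hmem : j ∈ range (N + 1) := mem_range.2 (Nat.lt_succ_of_le hj)
  have hGT : _ ∣ hT N (powAndOnes N j) := hdvd.trans (gcd_dvd (powAndOnes_mem_terParts j))
  rw [hT_eq_prod_cyclotomic, ← mul_prod_erase _ _ hmem, hTExp_powAndOnes hj, pow_succ,
    mul_dvd_mul_iff_left (pow_ne_zero _ hprime.ne_zero)] at hGT
  obtain ⟨i, hi, hji⟩ := (hprime.dvd_finsetProd_iff _).1 hGT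
  have := (cyclotomic_dvd_cyclotomic_iff (by positivity) (by positivity)).1
    (hprime.dvd_of_dvd_pow hji)
  exact (mem_erase.1 hi).1 (Nat.pow_right_injective le_add_self (show 3 ^ i = 3 ^ j by omega))

theorem GT_eq_prod_cyclotomic (N : ℕ) :
    GT N = ∏ j ∈ range (N + 1), cyclotomic (2 * 3 ^ j) ℤ ^ GTExp N j := by
  have hdvd : ∏ j ∈ range (N + 1), cyclotomic (2 * 3 ^ j) ℤ ^ GTExp N j ∣ GT N :=
    dvd_gcd fun μ _ => (hT_eq_prod_cyclotomic μ).symm ▸ prod_dvd_prod_of_dvd _ _ fun j hj =>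
      pow_dvd_pow _ (GTExp_le_hTExp μ (Nat.le_of_lt_succ (mem_range.1 hj)))
  have hdvd' : GT N ∣ ∏ j ∈ range (N + 1), cyclotomic (2 * 3 ^ j) ℤ ^ GTExp N j :=
    dvd_prod_pow_of_forall_not_pow_succ_dvd prime_cyclotomic_two_mul_three_pow _
      ((gcd_dvd (f := hT N) (powAndOnes_mem_terParts 0)).trans (hT_eq_prod_cyclotomic _).dvd)
      fun j hj => cyclotomic_pow_succ_not_dvd_GT (Nat.le_of_lt_succ (mem_range.1 hj))
  calc GT N = normalize (GT N) := normalize_gcd.symm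
    _ = normalize (∏ j ∈ range (N + 1), cyclotomic (2 * 3 ^ j) ℤ ^ GTExp N j) :=
      normalize_eq_normalize hdvd' hdvd
    _ = _ := (monic_prod_of_monic _ _ fun j _ => (cyclotomic.monic _ ℤ).pow _).normalize_eq_self

theorem numT_eq_sum_prod_cyclotomic (N : ℕ) :
    numT N = ∑ μ ∈ terParts N,
      ∏ j ∈ range (N + 1), cyclotomic (2 * 3 ^ j) ℤ ^ (hTExp N μ j - GTExp N j) := by
  have hspec : ∑ μ ∈ terParts N, hT N μ = GT N * numT N := (GT_dvd_sum N).choose_spec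
  refine mul_left_cancel₀ ?_ (hspec.symm.trans ?_)
  · rw [GT_eq_prod_cyclotomic]
    exact prod_ne_zero_iff.2 fun j _ => pow_ne_zero _ (cyclotomic_ne_zero _ ℤ)
  · rw [mul_sum]
    refine sum_congr rfl fun μ _ => ?_
    rw [GT_eq_prod_cyclotomic, hT_eq_prod_cyclotomic, ← prod_mul_distrib]
    refine prod_congr rfl fun j hj => ?_
    rw [← pow_add, Nat.add_sub_cancel' (GTExp_le_hTExp μ (Nat.le_of_lt_succ (mem_range.1 hj)))]

theorem eval_neg_one_prod_cyclotomic_eq_zero {μ : N.Partition} (hμ : μ ∈ terParts N)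
    (hne : μ ≠ powAndOnes N 0) :
    eval (-1 : ℤ) (∏ j ∈ range (N + 1), cyclotomic (2 * 3 ^ j) ℤ ^ (hTExp N μ j - GTExp N j))
      = 0 := by
  rw [eval_prod]
  refine prod_eq_zero (mem_range.2 N.succ_pos) ?_
  have hcard : Multiset.card μ.parts ≠ N := fun h => hne (eq_powAndOnes_zero_of_card_eq h)
  have hcard_le : Multiset.card μ.parts ≤ N := by
    simpa [← range_eq_Ico, μ.sum_count_three_pow_eq_card hμ] using
      μ.sum_count_three_pow_Ico_le_div 0 (N + 1)
  rw [eval_pow, hTExp_sub_GTExp_zero hμ, pow_zero, mul_one, cyclotomic_two, eval_add, eval_X,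
    eval_one, neg_add_cancel]
  exact zero_pow (by omega)

theorem eval_neg_one_prod_cyclotomic_powAndOnes_zero :
    eval (-1 : ℤ) (∏ j ∈ range (N + 1),
      cyclotomic (2 * 3 ^ j) ℤ ^ (hTExp N (powAndOnes N 0) j - GTExp N j)) = 3 ^ GTExp N 0 := by
  rw [eval_prod, range_eq_Ico, prod_eq_prod_Ico_succ_bot (Nat.zero_lt_succ N),
    hTExp_powAndOnes (Nat.zero_le N), Nat.sub_self, pow_zero, eval_one, one_mul, GTExp,
    ← prod_pow_eq_pow_sum]
  refine prod_congr rfl fun j hj => ?_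
  obtain ⟨hj1, hjN⟩ := mem_Ico.1 hj
  obtain ⟨i, rfl⟩ := Nat.exists_eq_add_of_le' hj1
  rw [eval_pow, eval_neg_one_cyclotomic_two_mul_three_pow_succ,
    hTExp_powAndOnes_zero_sub_GTExp hj1 (Nat.le_of_lt_succ hjN)]

theorem eval_neg_one_numT (N : ℕ) :
    eval (-1 : ℤ) (numT N) = 3 ^ (Nat.factorial N).factorization 3 := by
  rw [numT_eq_sum_prod_cyclotomic, eval_finsetSum, sum_eq_single_of_mem _
    (powAndOnes_mem_terParts 0) fun μ hμ hne => eval_neg_one_prod_cyclotomic_eq_zero hμ hne,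
    eval_neg_one_prod_cyclotomic_powAndOnes_zero,
    Nat.factorization_factorial Nat.prime_three (Nat.lt_succ_of_le (Nat.log_le_self 3 N))]
  rfl

end

theorem Nat.factorization_factorial_succ_of_not_dvd {m p : ℕ} (h : ¬p ∣ m + 1) :
    (Nat.factorial (m + 1)).factorization p = (Nat.factorial m).factorization p := by
  rw [Nat.factorial_succ, Nat.factorization_mul m.succ_ne_zero m.factorial_ne_zero,
    Finsupp.add_apply, Nat.factorization_eq_zero_of_not_dvd h, zero_add]

theorem numT_eval_neg_one_blocks_general (n : ℕ) :
    Polynomial.eval (-1 : ℤ) (numT (3 * n)) = Polynomial.eval (-1 : ℤ) (numT (3 * n + 1)) ∧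
    Polynomial.eval (-1 : ℤ) (numT (3 * n + 1)) = Polynomial.eval (-1 : ℤ) (numT (3 * n + 2)) ∧
    Polynomial.eval (-1 : ℤ) (numT (3 * n + 2)) =
      3 ^ ((Nat.factorial (3 * n)).factorization 3) := by
  have h₁ : (Nat.factorial (3 * n + 1)).factorization 3 =
      (Nat.factorial (3 * n)).factorization 3 :=
    Nat.factorization_factorial_succ_of_not_dvd (by omega)
  have h₂ : (Nat.factorial (3 * n + 2)).factorization 3 =
      (Nat.factorial (3 * n + 1)).factorization 3 :=
    Nat.factorization_factorial_succ_of_not_dvd (by omega)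
  simp only [eval_neg_one_numT, h₁, h₂, and_self]

/-- For every integer `n ≥ 1`,
`num_T(3n,−1) = num_T(3n+1,−1) = num_T(3n+2,−1) = 3^{v₃((3n)!)}`, where `v₃(M)` is the
exponent of `3` in the prime factorization of `M`. -/
theorem numT_eval_neg_one_blocks (n : ℕ) (hn : 1 ≤ n) :
    Polynomial.eval (-1 : ℤ) (numT (3 * n)) = Polynomial.eval (-1 : ℤ) (numT (3 * n + 1)) ∧
    Polynomial.eval (-1 : ℤ) (numT (3 * n + 1)) = Polynomial.eval (-1 : ℤ) (numT (3 * n + 2)) ∧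
    Polynomial.eval (-1 : ℤ) (numT (3 * n + 2)) =
      3 ^ ((Nat.factorial (3 * n)).factorization 3) :=
  numT_eval_neg_one_blocks_general n
end

section
/- Fix integers n, d ≥ 1, put a := ⌊n/d⌋, and let λ be a partition of n. The exponent of Φ_{2d}(x) in the reduced summand q_λ(x) := h_λ(x)/G(n,x) (the largest k such that Φ_{2d}(x)^k divides q_λ(x) in ℤ[x]) equals a − Σ_{j≥1, j odd} m_λ(d·j). -/
open Polynomial Finset

/-- `h_λ(x) = ∏_{i=1}^{n} (1+x^i)^(⌊n/i⌋ - m_λ(i))` in `ℤ[x]`, where `m_λ(i)` is the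
multiplicity of the part `i` in the partition `λ` of `n`. -/
noncomputable def hPoly (n : ℕ) (μ : Nat.Partition n) : Polynomial ℤ :=
  ∏ i ∈ Finset.Icc 1 n, (1 + X ^ i) ^ (n / i - μ.parts.count i)

/-- `G(n,x)`: the (normalized) gcd of the `h_λ(x)` over all partitions `λ` of `n`. -/
noncomputable def GPoly (n : ℕ) : Polynomial ℤ :=
  Finset.univ.gcd (hPoly n)

theorem GPoly_dvd_sum (n : ℕ) :
    ∃ q : Polynomial ℤ, (∑ μ : Nat.Partition n, hPoly n μ) = GPoly n * q :=
  exists_eq_mul_right_of_dvd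
    (Finset.dvd_sum fun μ _ => Finset.gcd_dvd (Finset.mem_univ μ))

/-- `num(n,x) = (∑_{λ ⊢ n} h_λ(x)) / G(n,x)`. -/
noncomputable def numPoly (n : ℕ) : Polynomial ℤ :=
  (GPoly_dvd_sum n).choose

theorem GPoly_dvd_prod (n : ℕ) :
    ∃ q : Polynomial ℤ,
      (∏ i ∈ Finset.Icc 1 n, ((1 : Polynomial ℤ) + X ^ i) ^ (n / i)) = GPoly n * q :=
  exists_eq_mul_right_of_dvd <|
    dvd_trans (Finset.gcd_dvd (Finset.mem_univ (Nat.Partition.indiscrete n)))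
      (Finset.prod_dvd_prod_of_dvd _ _ fun _ _ => pow_dvd_pow _ (Nat.sub_le _ _))

/-- `den(n,x) = (∏_{i=1}^{n} (1+x^i)^⌊n/i⌋) / G(n,x)`. -/
noncomputable def denPoly (n : ℕ) : Polynomial ℤ :=
  (GPoly_dvd_prod n).choose

/-! `Φ_{2d}` is prime in `ℤ[X]` and divides `1 + X ^ i` exactly once if `i` is an odd multiple of
`d`, and not at all otherwise. Hence its exponent in `h_λ` is `∑_{j odd} (⌊n/(dj)⌋ - m_λ(dj))`.
Since `d · ∑_{j odd} m_λ(dj) ≤ n`, the subtracted sum is at most `⌊n/d⌋`, with equality for the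
partition with `⌊n/d⌋` parts equal to `d` and the rest equal to `1`. So the exponent in the gcd
`G(n)` is `∑_{j odd} ⌊n/(dj)⌋ - ⌊n/d⌋`, and the exponent in `q_λ` is the difference. -/

namespace Polynomial

lemma prime_cyclotomic_int {m : ℕ} (hm : 0 < m) : Prime (cyclotomic m ℤ) :=
  UniqueFactorizationMonoid.irreducible_iff_prime.mp (cyclotomic.irreducible hm)

lemma emultiplicity_cyclotomic_cyclotomic {m k : ℕ} (hm : 0 < m) (hk : 0 < k) :
    emultiplicity (cyclotomic m ℤ) (cyclotomic k ℤ) = if k = m then 1 else 0 := by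
  split_ifs with h
  · subst h
    exact (FiniteMultiplicity.of_prime_left (prime_cyclotomic_int hk)
      (cyclotomic.monic k ℤ).ne_zero).emultiplicity_self
  · refine emultiplicity_eq_zero.mpr fun hdvd => h (cyclotomic_injective (R := ℤ) ?_).symm
    exact eq_of_monic_of_associated (R := ℤ) (cyclotomic.monic m ℤ) (cyclotomic.monic k ℤ)
      ((cyclotomic.irreducible hm).associated_of_dvd (cyclotomic.irreducible hk) hdvd)

lemma emultiplicity_cyclotomic_X_pow_sub_one {m N : ℕ} (hm : 0 < m) (hN : 0 < N) :
    emultiplicity (cyclotomic m ℤ) (X ^ N - 1 : ℤ[X]) = if m ∣ N then 1 else 0 := by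
  rw [← prod_cyclotomic_eq_X_pow_sub_one hN,
    Finset.emultiplicity_prod (prime_cyclotomic_int hm),
    Finset.sum_congr rfl fun k hk =>
      emultiplicity_cyclotomic_cyclotomic hm (Nat.pos_of_mem_divisors hk),
    Finset.sum_ite_eq']
  simp [Nat.mem_divisors, hN.ne']

/-- `1 + X ^ i = (X ^ (2 * i) - 1) / (X ^ i - 1)`, and `Φ_{2d}` divides the numerator exactly
when `d ∣ i`, the denominator exactly when `2 * d ∣ i`. -/
lemma emultiplicity_cyclotomic_two_mul_one_add_X_pow {d i : ℕ} (hd : 0 < d) (hi : 0 < i) :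
    emultiplicity (cyclotomic (2 * d) ℤ) (1 + X ^ i : ℤ[X]) =
      if d ∣ i ∧ Odd (i / d) then 1 else 0 := by
  have hp := prime_cyclotomic_int (m := 2 * d) (by omega)
  have hsplit := emultiplicity_mul (a := (X ^ i - 1 : ℤ[X])) (b := 1 + X ^ i) hp
  rw [show (X ^ i - 1) * (1 + X ^ i) = (X ^ (2 * i) - 1 : ℤ[X]) by ring,
    emultiplicity_cyclotomic_X_pow_sub_one (by omega) (by omega),
    emultiplicity_cyclotomic_X_pow_sub_one (by omega) hi] at hsplit
  simp only [Nat.mul_dvd_mul_iff_left two_pos] at hsplit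
  rcases em (d ∣ i) with ⟨t, rfl⟩ | hdi
  · have h2 : 2 * d ∣ d * t ↔ ¬ Odd t := by
      rw [mul_comm 2 d, Nat.mul_dvd_mul_iff_left hd, Nat.not_odd_iff_even, even_iff_two_dvd]
    simp only [dvd_mul_right, if_true, h2, Nat.mul_div_cancel_left t hd, true_and] at hsplit ⊢
    by_cases ht : Odd t
    · simpa [ht] using hsplit.symm
    · simp only [ht, not_false_eq_true, if_true, if_false] at hsplit ⊢
      exact (WithTop.add_left_inj ENat.one_ne_top).1 (hsplit.symm.trans (add_zero 1).symm)
  · have h2 : ¬ 2 * d ∣ i := fun h => hdi ((dvd_mul_left d 2).trans h)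
    simpa [hdi, h2] using hsplit.symm

end Polynomial

lemma emultiplicity_finset_gcd_eq {ι α : Type*} [CommMonoidWithZero α] [NormalizedGCDMonoid α]
    {s : Finset ι} {f : ι → α} {p : α} {k : ℕ} (hdvd : ∀ i ∈ s, p ^ k ∣ f i) {i₀ : ι}
    (hi₀ : i₀ ∈ s) (hndvd : ¬ p ^ (k + 1) ∣ f i₀) :
    emultiplicity p (s.gcd f) = k :=
  emultiplicity_eq_coe.mpr ⟨Finset.dvd_gcd hdvd, fun h => hndvd (h.trans (Finset.gcd_dvd hi₀))⟩

lemma sum_odd_mul_eq_sum_ite {M : Type*} [AddCommMonoid M] {n d : ℕ} (hd : 0 < d) {f : ℕ → M}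
    (hf : ∀ i, n < i → f i = 0) :
    ∑ j ∈ (Icc 1 n).filter (fun j => Odd j), f (d * j) =
      ∑ i ∈ Icc 1 n, if d ∣ i ∧ Odd (i / d) then f i else 0 := by
  refine sum_bij_ne_zero (fun j _ _ => d * j) ?_ ?_ ?_ ?_
  · intro j hj hfj
    simp only [mem_filter, mem_Icc] at hj ⊢
    exact ⟨Nat.mul_pos hd hj.1.1, not_lt.mp fun h => hfj (hf _ h)⟩
  · intro a _ _ b _ _ h
    exact Nat.eq_of_mul_eq_mul_left hd h
  · intro i hi hgi
    obtain ⟨⟨t, rfl⟩, ht⟩ : d ∣ i ∧ Odd (i / d) := by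
      by_contra h
      exact hgi (if_neg h)
    rw [if_pos ⟨dvd_mul_right d t, ht⟩] at hgi
    rw [Nat.mul_div_cancel_left t hd] at ht
    simp only [mem_filter, mem_Icc] at hi ⊢
    exact ⟨t, ⟨⟨ht.pos, (Nat.le_mul_of_pos_left t hd).trans hi.2⟩, ht⟩, hgi, rfl⟩
  · intro j hj _
    rw [if_pos ⟨dvd_mul_right d j, (Nat.mul_div_cancel_left j hd).symm ▸ (mem_filter.mp hj).2⟩]

lemma div_le_sum_div_odd_mul (n d : ℕ) :
    n / d ≤ ∑ j ∈ (Icc 1 n).filter (fun j => Odd j), n / (d * j) := by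
  rcases n.eq_zero_or_pos with rfl | hn
  · simp
  · simpa using single_le_sum (f := fun j => n / (d * j)) (fun _ _ => Nat.zero_le _)
      (mem_filter.mpr ⟨mem_Icc.mpr ⟨le_rfl, hn⟩, odd_one⟩)

namespace Nat.Partition

variable {n : ℕ}

lemma sum_count_mul (μ : n.Partition) : ∑ i ∈ Icc 1 n, μ.parts.count i * i = n := by
  have hsub : μ.parts.toFinset ⊆ Icc 1 n := fun i hi => by
    have hi := Multiset.mem_toFinset.mp hi
    exact mem_Icc.mpr ⟨μ.parts_pos hi, le_of_mem_parts hi⟩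
  simpa using (Finset.sum_multiset_count_of_subset μ.parts _ hsub).symm.trans μ.parts_sum

lemma count_mul_le (μ : n.Partition) (i : ℕ) : μ.parts.count i * i ≤ n := by
  by_cases hi : i ∈ Icc 1 n
  · exact (single_le_sum (f := fun i => μ.parts.count i * i) (fun _ _ => Nat.zero_le _)
      hi).trans_eq μ.sum_count_mul
  · rw [Multiset.count_eq_zero.mpr fun h => hi (mem_Icc.mpr ⟨μ.parts_pos h, le_of_mem_parts h⟩),
      zero_mul]
    exact Nat.zero_le n

lemma count_le_div (μ : n.Partition) (i : ℕ) : μ.parts.count i ≤ n / i := by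
  rcases i.eq_zero_or_pos with rfl | hi
  · rw [Nat.div_zero, Multiset.count_eq_zero.mpr fun h => lt_irrefl 0 (μ.parts_pos h)]
  · exact (Nat.le_div_iff_mul_le hi).mpr (μ.count_mul_le i)

lemma sum_count_odd_mul_le (μ : n.Partition) {d : ℕ} (hd : 0 < d) :
    ∑ j ∈ (Icc 1 n).filter (fun j => Odd j), μ.parts.count (d * j) ≤ n / d := by
  rw [Nat.le_div_iff_mul_le hd, sum_mul]
  calc ∑ j ∈ (Icc 1 n).filter (fun j => Odd j), μ.parts.count (d * j) * d
      ≤ ∑ j ∈ (Icc 1 n).filter (fun j => Odd j), μ.parts.count (d * j) * (d * j) :=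
        sum_le_sum fun j hj =>
          Nat.mul_le_mul_left _ (Nat.le_mul_of_pos_right d (mem_filter.mp hj).2.pos)
    _ = ∑ i ∈ Icc 1 n, if d ∣ i ∧ Odd (i / d) then μ.parts.count i * i else 0 :=
        sum_odd_mul_eq_sum_ite (f := fun i => μ.parts.count i * i) hd fun i hi => by
          rw [Nat.eq_zero_of_le_zero ((μ.count_le_div i).trans_eq (Nat.div_eq_of_lt hi)), zero_mul]
    _ ≤ ∑ i ∈ Icc 1 n, μ.parts.count i * i := sum_le_sum fun i _ => by split_ifs <;> simp
    _ = n := μ.sum_count_mul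

def replicateDiv (n d : ℕ) : n.Partition :=
  ofSums n (Multiset.replicate (n / d) d + Multiset.replicate (n % d) 1)
    (by simp [Nat.div_add_mod'])

lemma sum_count_odd_mul_replicateDiv {d : ℕ} (hd : 0 < d) :
    ∑ j ∈ (Icc 1 n).filter (fun j => Odd j), (replicateDiv n d).parts.count (d * j) =
      n / d := by
  refine le_antisymm ((replicateDiv n d).sum_count_odd_mul_le hd) ?_
  rcases n.eq_zero_or_pos with rfl | hn
  · simp
  calc n / d ≤ (replicateDiv n d).parts.count (d * 1) := by
        rw [replicateDiv, count_ofSums_of_ne_zero _ (by omega), Multiset.count_add, mul_one,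
          Multiset.count_replicate_self]
        exact Nat.le_add_right _ _
    _ ≤ _ := single_le_sum (f := fun j => (replicateDiv n d).parts.count (d * j))
        (fun _ _ => Nat.zero_le _) (mem_filter.mpr ⟨mem_Icc.mpr ⟨le_rfl, hn⟩, odd_one⟩)

end Nat.Partition

lemma emultiplicity_cyclotomic_hPoly {n d : ℕ} (hd : 0 < d) (μ : n.Partition) :
    emultiplicity (cyclotomic (2 * d) ℤ) (hPoly n μ) =
      ((∑ j ∈ (Icc 1 n).filter (fun j => Odd j), n / (d * j)) -
        ∑ j ∈ (Icc 1 n).filter (fun j => Odd j), μ.parts.count (d * j) : ℕ) := by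
  have hp := prime_cyclotomic_int (m := 2 * d) (by omega)
  have hfactor : ∀ i ∈ Icc 1 n,
      emultiplicity (cyclotomic (2 * d) ℤ) ((1 + X ^ i) ^ (n / i - μ.parts.count i)) =
        ((if d ∣ i ∧ Odd (i / d) then n / i - μ.parts.count i else 0 : ℕ) : ℕ∞) := by
    intro i hi
    rw [emultiplicity_pow hp,
      emultiplicity_cyclotomic_two_mul_one_add_X_pow hd (mem_Icc.mp hi).1]
    split_ifs <;> simp
  rw [hPoly, Finset.emultiplicity_prod hp, sum_congr rfl hfactor, ← Nat.cast_sum,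
    ← sum_odd_mul_eq_sum_ite (f := fun i => n / i - μ.parts.count i) hd
      fun i hi => by simp [Nat.div_eq_of_lt hi],
    ← sum_tsub_distrib _ fun j _ => μ.count_le_div (d * j)]

lemma emultiplicity_cyclotomic_GPoly {n d : ℕ} (hd : 0 < d) :
    emultiplicity (cyclotomic (2 * d) ℤ) (GPoly n) =
      ((∑ j ∈ (Icc 1 n).filter (fun j => Odd j), n / (d * j)) - n / d : ℕ) := by
  refine emultiplicity_finset_gcd_eq (fun μ _ => ?_)
    (mem_univ (Nat.Partition.replicateDiv n d)) ?_
  · rw [pow_dvd_iff_le_emultiplicity, emultiplicity_cyclotomic_hPoly hd]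
    exact Nat.cast_le.mpr (Nat.sub_le_sub_left (μ.sum_count_odd_mul_le hd) _)
  · rw [pow_dvd_iff_le_emultiplicity, emultiplicity_cyclotomic_hPoly hd,
      Nat.Partition.sum_count_odd_mul_replicateDiv hd]
    exact_mod_cast Nat.not_succ_le_self _

/-- The sum over odd `j` is cut off at `n`, which loses nothing since `m_λ(d·j) = 0` for
`d·j > n`. -/
theorem exponent_of_cyclotomic_in_qPoly_general (n d : ℕ) (hd : 1 ≤ d)
    (μ : Nat.Partition n) (q : Polynomial ℤ) (hq : hPoly n μ = GPoly n * q) :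
    ∃ k : ℕ,
      (k : ℤ) = (n / d : ℕ) -
          ∑ j ∈ (Finset.Icc 1 n).filter (fun j => Odd j), (μ.parts.count (d * j) : ℤ) ∧
      Polynomial.cyclotomic (2 * d) ℤ ^ k ∣ q ∧
      ¬ Polynomial.cyclotomic (2 * d) ℤ ^ (k + 1) ∣ q := by
  set C := ∑ j ∈ (Icc 1 n).filter (fun j => Odd j), μ.parts.count (d * j) with hC
  set S := ∑ j ∈ (Icc 1 n).filter (fun j => Odd j), n / (d * j)
  have hCd : C ≤ n / d := μ.sum_count_odd_mul_le hd
  have hdS : n / d ≤ S := div_le_sum_div_odd_mul n d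
  have hmul := emultiplicity_mul (a := GPoly n) (b := q)
    (prime_cyclotomic_int (m := 2 * d) (by omega))
  rw [← hq, emultiplicity_cyclotomic_hPoly hd, emultiplicity_cyclotomic_GPoly hd,
    show S - C = (S - n / d) + (n / d - C) by omega, Nat.cast_add] at hmul
  refine ⟨n / d - C, by rw [Nat.cast_sub hCd, hC, Nat.cast_sum], emultiplicity_eq_coe.mp
    ((WithTop.add_left_inj (ENat.natCast_ne_top _)).1 hmul).symm⟩

/-- For `n, d ≥ 1`, `a := ⌊n/d⌋` and a partition `λ` of `n`, the exponent of `Φ_{2d}(x)`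
in the reduced summand `q_λ(x) := h_λ(x)/G(n,x)` equals `a − Σ_{j≥1, j odd} m_λ(d·j)`
(a nonnegative integer).  The quotient `q_λ` is characterized by `h_λ = G(n,x)·q_λ`,
and the sum over odd `j ≥ 1` is truncated at `j = n` since `m_λ(d·j) = 0` for `d·j > n`. -/
theorem exponent_of_cyclotomic_in_qPoly (n d : ℕ) (hn : 1 ≤ n) (hd : 1 ≤ d)
    (μ : Nat.Partition n) (q : Polynomial ℤ) (hq : hPoly n μ = GPoly n * q) :
    ∃ k : ℕ,
      (k : ℤ) = (n / d : ℕ) -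
          ∑ j ∈ (Finset.Icc 1 n).filter (fun j => Odd j), (μ.parts.count (d * j) : ℤ) ∧
      Polynomial.cyclotomic (2 * d) ℤ ^ k ∣ q ∧
      ¬ Polynomial.cyclotomic (2 * d) ℤ ^ (k + 1) ∣ q :=
  exponent_of_cyclotomic_in_qPoly_general n d hd μ q hq
end
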